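/- Let C be a Grothendieck category with a Gabriel–Popescu embedding (U, Λ, S, Q). A right Λ-module M lies in the essential image of S (i.e. M ≅ S(C) for some object C of C) if and only if for every right Λ-module X with Q(X) = 0 one has Hom_Λ(X, M) = 0 and Ext¹_Λ(X, M) = 0. -/

import Mathlib

open CategoryTheory Limits Opposite

universe v u

/-- The module structure of Mathlib (Dec 2024) `moduleEndLeft`: `End X` (for `X : Cᵒᵖ`) acts on
`unop X ⟶ Y` by precomposition. -/
instance oldModuleEndLeft {C : Type u} [Category.{v} C] [Preadditive C] {X : Cᵒᵖ} {Y : C} :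
    Module (End X) (unop X ⟶ Y) where
  smul r f := r.unop ≫ f
  one_smul := Category.id_comp
  mul_smul _ _ _ := Category.assoc _ _ _
  smul_add _ _ _ := Preadditive.comp_add _ _ _ _ _ _
  smul_zero _ := Limits.comp_zero
  zero_smul _ := Limits.zero_comp
  add_smul _ _ _ := Preadditive.add_comp _ _ _ _ _ _

/-- The functor `preadditiveCoyonedaObj` of Mathlib (Dec 2024). -/
def oldPreadditiveCoyonedaObj {C : Type u} [Category.{v} C] [Preadditive C] (X : Cᵒᵖ) :
    C ⥤ ModuleCat.{v} (End X) where
  obj Y := ModuleCat.of _ (unop X ⟶ Y)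
  map f := ModuleCat.ofHom
    { toFun := fun g => g ≫ f
      map_add' := fun _ _ => Preadditive.add_comp _ _ _ _ _ _
      map_smul' := fun _ _ => Category.assoc _ _ _ }

/-- A Gabriel–Popescu embedding for a Grothendieck category `C`: a generator `U`,
the functor `S = Hom_C(U, -)` to right modules over `Λ = End U` (realized as
`preadditiveCoyonedaObj (op U) : C ⥤ ModuleCat (End (op U))`, where the module structure
on `U ⟶ X` is given by precomposition, i.e. the right `End U`-module structure),
together with a left adjoint `Q` of `S` which is exact, such that `S` is fully faithful. -/
structure GabrielPopescuEmbedding (C : Type u) [Category.{v} C] [Abelian C] where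
  U : C
  isSeparator : IsSeparator U
  Q : ModuleCat.{v} (End (op U)) ⥤ C
  adj : Q ⊣ oldPreadditiveCoyonedaObj (op U)
  qExact : PreservesFiniteLimits Q
  sFull : (oldPreadditiveCoyonedaObj (op U)).Full
  sFaithful : (oldPreadditiveCoyonedaObj (op U)).Faithful

/-! If `M ≅ S c`, a morphism `X ⟶ S c` is adjoint to a morphism `Q X ⟶ c`, and a 1-cocycle
`P₁ ⟶ S c` on a projective resolution of `X` is adjoint to a map `Q P₁ ⟶ c` killing `Q P₂`; by
exactness of `Q` it descends along `Q P₁ ⟶ Q P₀`, which is epi because `Q X = 0`.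
Conversely, `Q` inverts the unit `η : M ⟶ S (Q M)`, hence kills its kernel and cokernel. The Hom
condition makes `η` mono, the Ext condition splits `0 ⟶ M ⟶ S (Q M) ⟶ coker η ⟶ 0`, and the
splitting `coker η ⟶ S (Q M)` vanishes by adjunction, so `coker η = 0`. -/

namespace CategoryTheory

section Ext

variable {A : Type*} [Category A] [Abelian A] [Linear ℤ A] [EnoughProjectives A]

lemma ProjectiveResolution.subsingleton_ext_one_iff {X : A} (P : ProjectiveResolution X)
    (M : A) :
    Subsingleton (((Ext ℤ A 1).obj (op X)).obj M) ↔
      ∀ f : P.complex.X 1 ⟶ M, P.complex.d 2 1 ≫ f = 0 →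
        ∃ g : P.complex.X 0 ⟶ M, P.complex.d 1 0 ≫ g = f := by
  rw [← ModuleCat.isZero_iff_subsingleton,
    Iso.isZero_iff (P.isoExt 1 M), ← HomologicalComplex.exactAt_iff_isZero_homology,
    HomologicalComplex.exactAt_iff' _ 0 1 2 (by simp) (by simp),
    ShortComplex.moduleCat_exact_iff]
  rfl

lemma ShortComplex.ShortExact.exists_section_of_subsingleton_ext_one {S : ShortComplex A}
    (hS : S.ShortExact) (hExt : Subsingleton (((Ext ℤ A 1).obj (Opposite.op S.X₃)).obj S.X₁)) :
    ∃ s : S.X₃ ⟶ S.X₂, s ≫ S.g = 𝟙 S.X₃ := by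
  have : Mono S.f := hS.mono_f
  have : Epi S.g := hS.epi_g
  let P := ProjectiveResolution.of S.X₃
  let π₀ : P.complex.X 0 ⟶ S.X₃ := P.π.f 0
  have : Epi π₀ := inferInstanceAs (Epi (P.π.f 0))
  have hπ₀ : P.complex.d 1 0 ≫ π₀ = 0 := P.complex_d_comp_π_f_zero
  let α : P.complex.X 0 ⟶ S.X₂ := Projective.factorThru π₀ S.g
  have hα : α ≫ S.g = π₀ := Projective.factorThru_comp _ _
  obtain ⟨β, hβ⟩ := hS.exact.lift' (P.complex.d 1 0 ≫ α) (by rw [Category.assoc, hα, hπ₀])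
  have hβ_cocycle : P.complex.d 2 1 ≫ β = 0 := by
    rw [← cancel_mono S.f, Category.assoc, hβ, ← Category.assoc, P.complex.d_comp_d,
      zero_comp, zero_comp]
  obtain ⟨γ, hγ⟩ := (P.subsingleton_ext_one_iff S.X₁).1 hExt β hβ_cocycle
  -- `α - γ ≫ S.f` vanishes on the image of `P₁`, so it descends to `X₃ = coker (P₁ ⟶ P₀)`.
  have hd : P.complex.d 1 0 ≫ (α - γ ≫ S.f) = 0 := by
    rw [Preadditive.comp_sub, ← Category.assoc, hγ, hβ, sub_self]
  let s : S.X₃ ⟶ S.X₂ := P.isColimitCokernelCofork.desc (CokernelCofork.ofπ _ hd)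
  have hs : π₀ ≫ s = α - γ ≫ S.f := Cofork.IsColimit.π_desc P.isColimitCokernelCofork
  refine ⟨s, ?_⟩
  rw [← cancel_epi π₀, ← Category.assoc, hs, Preadditive.sub_comp, hα, Category.assoc,
    S.zero, comp_zero, sub_zero, Category.comp_id]

end Ext

namespace Adjunction

variable {D C : Type*} [Category D] [Category C] {Q : D ⥤ C} {S : C ⥤ D}

lemma eq_zero_of_isZero_obj [HasZeroMorphisms D] [HasZeroMorphisms C] (adj : Q ⊣ S) {X : D}
    (hX : IsZero (Q.obj X)) {c : C} (f : X ⟶ S.obj c) : f = 0 := by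
  have := adj.isRightAdjoint
  rw [← (adj.homEquiv X c).apply_symm_apply f, hX.eq_of_src ((adj.homEquiv X c).symm f) 0,
    homEquiv_unit, S.map_zero, comp_zero]

section Abelian

variable [Abelian D] [Abelian C] [Linear ℤ D] [EnoughProjectives D] [PreservesFiniteLimits Q]

lemma subsingleton_ext_one_right_obj (adj : Q ⊣ S) {X : D} (hX : IsZero (Q.obj X)) (c : C) :
    Subsingleton (((Ext ℤ D 1).obj (Opposite.op X)).obj (S.obj c)) := by
  have : PreservesColimits Q := adj.leftAdjoint_preservesColimits
  let P := ProjectiveResolution.of X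
  rw [P.subsingleton_ext_one_iff]
  intro f hf
  -- `Q P₁ ⟶ Q P₀ ⟶ Q X = 0` is exact, so `Q d₁₀` is epi
  have : Epi (Q.map (P.complex.d 1 0)) :=
    ((ShortComplex.exact_of_g_is_cokernel (.mk _ _ P.complex_d_comp_π_f_zero)
      P.isColimitCokernelCofork).map Q).epi_f (hX.eq_of_tgt _ _)
  have hQP : (ShortComplex.mk (Q.map (P.complex.d 2 1)) (Q.map (P.complex.d 1 0))
      (by rw [← Q.map_comp, P.complex.d_comp_d, Q.map_zero])).Exact :=
    (P.exact_succ 0).map Q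
  obtain ⟨g, hg⟩ := hQP.desc' ((adj.homEquiv _ c).symm f) (by
    rw [← homEquiv_naturality_left_symm, hf, homEquiv_counit]
    simp only [Functor.map_zero, zero_comp])
  refine ⟨adj.homEquiv _ c g, ?_⟩
  rw [← homEquiv_naturality_left]
  exact (congrArg (adj.homEquiv _ c) hg).trans (Equiv.apply_symm_apply _ _)

lemma isIso_unit_app_of_orthogonal [S.Full] [S.Faithful] (adj : Q ⊣ S) (M : D)
    (hM : ∀ X : D, IsZero (Q.obj X) →
      (∀ f : X ⟶ M, f = 0) ∧ Subsingleton (((Ext ℤ D 1).obj (Opposite.op X)).obj M)) :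
    IsIso (adj.unit.app M) := by
  have : PreservesColimits Q := adj.leftAdjoint_preservesColimits
  set η := adj.unit.app M
  -- `Q η` is invertible because `S` is fully faithful
  have hker : IsZero (Q.obj (kernel η)) :=
    (isZero_kernel_of_mono (Q.map η)).of_iso (PreservesKernel.iso Q η)
  have hcoker : IsZero (Q.obj (cokernel η)) :=
    (isZero_cokernel_of_epi (Q.map η)).of_iso (PreservesCokernel.iso Q η)
  have : Mono η := Abelian.mono_of_kernel_ι_eq_zero _ ((hM _ hker).1 (kernel.ι η))
  have hη : (ShortComplex.mk η (cokernel.π η) (cokernel.condition η)).ShortExact :=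
    .mk' (ShortComplex.exact_of_g_is_cokernel _ (cokernelIsCokernel η)) inferInstance
      inferInstance
  obtain ⟨s, hs⟩ := hη.exists_section_of_subsingleton_ext_one (hM _ hcoker).2
  have : IsZero (cokernel η) := by
    rw [IsZero.iff_id_eq_zero, ← hs, adj.eq_zero_of_isZero_obj hcoker s, zero_comp]
  have : Epi η := Abelian.epi_of_cokernel_π_eq_zero _ (this.eq_of_tgt _ _)
  exact isIso_of_mono_of_epi η

end Abelian

end Adjunction

end CategoryTheory

theorem stmt12_general {C : Type u} [Category.{v} C] [Abelian C]
    (E : GabrielPopescuEmbedding C) (M : ModuleCat.{v} (End (op E.U))) :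
    (∃ c : C, Nonempty ((oldPreadditiveCoyonedaObj (op E.U)).obj c ≅ M)) ↔
      ∀ X : ModuleCat.{v} (End (op E.U)), IsZero (E.Q.obj X) →
        (∀ f : X ⟶ M, f = 0) ∧
        Subsingleton
          (((_root_.Ext ℤ (ModuleCat.{v} (End (op E.U))) 1).obj (Opposite.op X)).obj M) := by
  have := E.sFull
  have := E.sFaithful
  have := E.qExact
  constructor
  · rintro ⟨c, ⟨e⟩⟩ X hX
    refine ⟨fun f => ?_, ?_⟩
    · simpa using congrArg (· ≫ e.hom) (E.adj.eq_zero_of_isZero_obj hX (f ≫ e.inv))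
    · have := E.adj.subsingleton_ext_one_right_obj hX c
      exact (((Ext ℤ _ 1).obj (Opposite.op X)).mapIso e).toLinearEquiv.toEquiv.symm.subsingleton
  · intro h
    have := E.adj.isIso_unit_app_of_orthogonal M h
    exact E.adj.mem_essImage_of_unit_isIso M

/-- For a Gabriel–Popescu embedding `(U, Λ, S, Q)` of a Grothendieck category `C`, a right
`Λ`-module `M` lies in the essential image of `S` iff `Hom_Λ(X, M) = 0` and
`Ext¹_Λ(X, M) = 0` for every right `Λ`-module `X` with `Q X = 0`. -/
theorem stmt12 {C : Type u} [Category.{v} C] [Abelian C] [HasLimits C] [HasColimits C] [AB5 C]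
    (E : GabrielPopescuEmbedding C) (M : ModuleCat.{v} (End (op E.U))) :
    (∃ c : C, Nonempty ((oldPreadditiveCoyonedaObj (op E.U)).obj c ≅ M)) ↔
      ∀ X : ModuleCat.{v} (End (op E.U)), IsZero (E.Q.obj X) →
        (∀ f : X ⟶ M, f = 0) ∧
        Subsingleton
          (((_root_.Ext ℤ (ModuleCat.{v} (End (op E.U))) 1).obj (Opposite.op X)).obj M) :=
  stmt12_general E M
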